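/- arXiv:1010.1203 — 4 statements merged into one kernel-verified Lean document; each statement's English description precedes it below -/
import Mathlib

section
/- Let p be a prime with p > 2, let r ≥ 1 and q = p^r with q > 3, let n ≥ 1, and let 0 ≤ i ≤ n. Let k be an algebraically closed field of characteristic p and let φ : 𝔽_q → k be a ring homomorphism. Then the first group cohomology H^1(SL_{n+1}(𝔽_q), ⋀^i k^{n+1}) of SL_{n+1}(𝔽_q) with coefficients in the i-th exterior power of the natural module k^{n+1} (action induced by φ) is zero. -/
open Matrix ExteriorAlgebra

/-- The algebra map of exterior algebras induced by a linear map preserves the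
`i`-th exterior power. -/
theorem map_mem_exteriorPower {k V W : Type*} [CommRing k] [AddCommGroup V] [Module k V]
    [AddCommGroup W] [Module k W] (f : V →ₗ[k] W) (i : ℕ) {x : ExteriorAlgebra k V}
    (hx : x ∈ ⋀[k]^i V) : ExteriorAlgebra.map f x ∈ ⋀[k]^i W := by
  have h2 : Submodule.map (ExteriorAlgebra.map f).toLinearMap
      (LinearMap.range (ι k (M := V))) ≤ LinearMap.range (ι k (M := W)) := by
    rw [ExteriorAlgebra.ι_range_map_map]
    rintro y ⟨v, -, rfl⟩
    exact LinearMap.mem_range_self _ v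
  have h3 : ∀ j : ℕ, (Submodule.map (ExteriorAlgebra.map f).toLinearMap
      (LinearMap.range (ι k (M := V)))) ^ j ≤ (LinearMap.range (ι k (M := W))) ^ j := by
    intro j
    induction j with
    | zero => simp
    | succ m ih =>
      rw [pow_succ, pow_succ]
      exact mul_le_mul' ih h2
  have h1 : Submodule.map (ExteriorAlgebra.map f).toLinearMap (⋀[k]^i V)
      = (Submodule.map (ExteriorAlgebra.map f).toLinearMap
          (LinearMap.range (ι k (M := V)))) ^ i := Submodule.map_pow _ _ i
  exact h3 i (h1 ▸ Submodule.mem_map_of_mem hx)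

/-- The representation of `G` on the `i`-th exterior power of `V` induced by a
representation of `G` on `V` (functorial action on the exterior power). -/
noncomputable def Representation.extPower {k G V : Type*} [CommRing k] [Group G]
    [AddCommGroup V] [Module k V] (ρ : Representation k G V) (i : ℕ) :
    Representation k G (⋀[k]^i V) where
  toFun g := (ExteriorAlgebra.map (ρ g)).toLinearMap.restrict
    (fun _x hx => map_mem_exteriorPower (ρ g) i hx)
  map_one' := by
    ext x
    simp only [LinearMap.restrict_coe_apply, _root_.map_one, Module.End.one_eq_id,
      ExteriorAlgebra.map_id, AlgHom.coe_id, id_eq, Module.End.one_apply]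
    rfl
  map_mul' g h := by
    ext x
    simp only [LinearMap.restrict_coe_apply, _root_.map_mul, Module.End.mul_eq_comp,
      ← ExteriorAlgebra.map_comp_map, AlgHom.coe_comp, Function.comp_apply,
      Module.End.mul_apply, LinearMap.coe_comp, AlgHom.comp_toLinearMap,
      LinearMap.restrict_coe_apply]
    rfl

/-- The natural representation of `SL_{n+1}(𝔽_q)` on `k^{n+1}`, acting by applying `φ`
entrywise and then by matrix–vector multiplication. -/
noncomputable def natRepSL (p r n : ℕ) [Fact p.Prime] (k : Type) [Field k]
    (φ : GaloisField p r →+* k) :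
    Representation k (Matrix.SpecialLinearGroup (Fin (n + 1)) (GaloisField p r))
      (Fin (n + 1) → k) where
  toFun M := ((M : Matrix (Fin (n + 1)) (Fin (n + 1)) (GaloisField p r)).map φ).mulVecLin
  map_one' := by
    simp only [Matrix.SpecialLinearGroup.coe_one, Matrix.map_one φ (map_zero φ) (_root_.map_one φ),
      Matrix.mulVecLin_one]
    rfl
  map_mul' A B := by
    simp only [Matrix.SpecialLinearGroup.coe_mul, Matrix.map_mul, Matrix.mulVecLin_mul,
      Module.End.mul_eq_comp]

/-!
Averaging over the diagonal torus `T` of `SL_{n+1}(𝔽_q)`, whose order is prime to `p`, replaces a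
1-cocycle `f` by a cohomologous one vanishing on `T`. Since `T` and the transvections `x_{ab}(c)`
generate the group, it remains to show that `f` kills every transvection. A diagonal `t` with
equal `a`- and `b`-entries commutes with `x_{ab}(c)`, so it fixes `f(x_{ab}(c))`. For `0 < i ≤ n`
the wedges `e_S` of standard basis vectors are weight vectors of `T` on `⋀^i`, and for each `S`
some such `t` has weight `∏_{c ∈ S} t_c ≠ 1` (for `n ≥ 2` a `t` with entries `x, x, x⁻²` at
`a, b, y` where `x² ≠ 1`, for `n = 1` the central element `-1`); hence every coordinate of
`f(x_{ab}(c))` vanishes. For `i = 0` the module is trivial, and conjugating by `diag(x, x⁻¹)`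
rescales `c` by `x² ≠ 1`, which forces the homomorphism `f` to kill `x_{ab}(c)`.
-/

universe u

open Finset Module groupCohomology

section

variable {F : Type*} [Field F]

theorem exists_ne_zero_sq_ne_one [Finite F] (h : 3 < Nat.card F) :
    ∃ x : F, x ≠ 0 ∧ x ^ 2 ≠ 1 := by
  classical
  have := Fintype.ofFinite F
  obtain ⟨x, -, hx⟩ := exists_mem_notMem_of_card_lt_card (s := ({0, 1, -1} : Finset F)) (t := univ)
    (card_le_three.trans_lt (by rwa [card_univ, ← Nat.card_eq_fintype_card]))
  simp only [mem_insert, mem_singleton, not_or] at hx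
  exact ⟨x, hx.1, by rw [Ne, sq_eq_one_iff]; tauto⟩

theorem iff_and_iff_of_ite_mul_ite_mul_ite_eq_one {x : F} (hx0 : x ≠ 0) (hx : x ^ 2 ≠ 1)
    {P Q R : Prop} [Decidable P] [Decidable Q] [Decidable R]
    (h : (if P then x else 1) * (if Q then x else 1) * (if R then (x ^ 2)⁻¹ else 1) = 1) :
    (P ↔ R) ∧ (Q ↔ R) := by
  have hx1 : x ≠ 1 := fun h1 => hx (by rw [h1, one_pow])
  by_cases hP : P <;> by_cases hQ : Q <;> by_cases hR : R <;> simp [hP, hQ, hR] at h ⊢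
  all_goals first
    | exact hx1 h
    | exact hx (sq_eq_one_iff.mpr h)
    | exact hx (by rwa [pow_two])
    | exact hx1 (by rwa [pow_two, mul_inv, ← mul_assoc, mul_inv_cancel₀ hx0, one_mul,
        inv_eq_one] at h)

variable {ι : Type*} [Fintype ι] [DecidableEq ι]

theorem exists_prod_eq_one_and_apply_eq_and_prod_ne_one {x : F} (hx0 : x ≠ 0) (hx : x ^ 2 ≠ 1)
    (h2 : (-1 : F) ≠ 1) {a b : ι} (hab : a ≠ b) {s : Finset ι} (hs : s.Nonempty)
    (hsu : s ≠ univ) : ∃ d : ι → F, ∏ c, d c = 1 ∧ d a = d b ∧ ∏ c ∈ s, d c ≠ 1 := by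
  by_cases hy : ∃ y, y ≠ a ∧ y ≠ b
  · obtain ⟨y₀, hy₀a, hy₀b⟩ := hy
    by_contra! H
    -- `d = (x, x, x⁻²)` at `(a, b, y)` has `∏ c ∈ s, d c = 1` only if `a, b, y` are all in `s`
    -- or all outside it.
    have hmem (y : ι) (hya : y ≠ a) (hyb : y ≠ b) : (a ∈ s ↔ y ∈ s) ∧ (b ∈ s ↔ y ∈ s) := by
      set w : ι → F := Pi.mulSingle a x * Pi.mulSingle b x * Pi.mulSingle y (x ^ 2)⁻¹
      have hprod (t : Finset ι) : ∏ c ∈ t, w c = (if a ∈ t then x else 1) *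
          (if b ∈ t then x else 1) * (if y ∈ t then (x ^ 2)⁻¹ else 1) := by
        simp only [w, Pi.mul_apply, prod_mul_distrib, prod_pi_mulSingle']
      refine iff_and_iff_of_ite_mul_ite_mul_ite_eq_one hx0 hx (hprod s ▸ H w ?_ ?_)
      · rw [hprod]
        simp only [mem_univ, if_true]
        rw [← pow_two, mul_inv_cancel₀ (pow_ne_zero 2 hx0)]
      · simp [w, hab, hab.symm, hya.symm, hyb.symm]
    have hall (c : ι) : c ∈ s ↔ a ∈ s := by
      by_cases hca : c = a
      · rw [hca]
      by_cases hcb : c = b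
      · rw [hcb, (hmem y₀ hy₀a hy₀b).2, (hmem y₀ hy₀a hy₀b).1]
      · exact (hmem c hca hcb).1.symm
    by_cases ha : a ∈ s
    · exact hsu (eq_univ_of_forall fun c => (hall c).2 ha)
    · obtain ⟨c, hc⟩ := hs
      exact ha ((hall c).1 hc)
  · push Not at hy
    have huniv : (univ : Finset ι) = {a, b} := by
      ext y
      simp only [mem_univ, mem_insert, mem_singleton, true_iff]
      by_cases hya : y = a
      · exact Or.inl hya
      · exact Or.inr (hy y hya)
    have hcard : #s = 1 := by
      have := card_lt_card (ssubset_univ_iff.mpr hsu)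
      rw [huniv, card_pair hab] at this
      have := hs.card_pos
      omega
    refine ⟨fun _ => -1, ?_, rfl, ?_⟩
    · rw [huniv, prod_pair hab, neg_one_mul, neg_neg]
    · rwa [prod_const, hcard, pow_one]

end

namespace exteriorPower

variable {k ι : Type*} [CommRing k] [Fintype ι] [LinearOrder ι] {n : ℕ}

theorem map_mulVecLin_diagonal_basis (d : ι → k) (s : Set.powersetCard ι n) :
    map n (diagonal d).mulVecLin ((Pi.basisFun k ι).exteriorPower n s)
      = (∏ c ∈ s.val, d c) • (Pi.basisFun k ι).exteriorPower n s := by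
  set e := Set.powersetCard.ofFinEmbEquiv.symm s
  have hprod : ∏ c ∈ s.val, d c = ∏ j, d (e j) := by
    conv_lhs => rw [← map_orderEmbOfFin_univ s.val s.prop, prod_map]
    rfl
  have hcomp : (diagonal d).mulVecLin ∘ Pi.basisFun k ι ∘ e
      = fun j => d (e j) • (Pi.basisFun k ι ∘ e) j := by
    ext j : 1
    simp [← Pi.single_smul]
  rw [basis_apply, map_apply_ιMulti_family, ιMulti_family, ιMulti_family, Function.comp_assoc,
    hcomp, AlternatingMap.map_smul_univ, hprod]

theorem basis_repr_map_mulVecLin_diagonal (d : ι → k) (x : ⋀[k]^n (ι → k))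
    (s : Set.powersetCard ι n) :
    ((Pi.basisFun k ι).exteriorPower n).repr (map n (diagonal d).mulVecLin x) s
      = (∏ c ∈ s.val, d c) * ((Pi.basisFun k ι).exteriorPower n).repr x s := by
  have : (((Pi.basisFun k ι).exteriorPower n).coord s).comp (map n (diagonal d).mulVecLin)
      = (∏ c ∈ s.val, d c) • ((Pi.basisFun k ι).exteriorPower n).coord s := by
    refine ((Pi.basisFun k ι).exteriorPower n).ext fun t => ?_
    simp only [LinearMap.comp_apply, map_mulVecLin_diagonal_basis, LinearMap.smul_apply,
      map_smul, Basis.coord_apply, Basis.repr_self, smul_eq_mul]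
    by_cases hts : t = s
    · rw [hts]
    · simp [hts]
  exact LinearMap.congr_fun this x

theorem eq_zero_of_forall_exists_map_diagonal_eq_self [IsDomain k] (x : ⋀[k]^n (ι → k))
    (h : ∀ s : Set.powersetCard ι n, ∃ d : ι → k,
      ∏ c ∈ s.val, d c ≠ 1 ∧ map n (diagonal d).mulVecLin x = x) : x = 0 := by
  refine ((Pi.basisFun k ι).exteriorPower n).forall_coord_eq_zero_iff.mp fun s => ?_
  obtain ⟨d, hd, hx⟩ := h s
  have := basis_repr_map_mulVecLin_diagonal d x s
  rw [hx, eq_comm, ← sub_eq_zero, ← sub_one_mul, mul_eq_zero] at this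
  exact this.resolve_left (sub_ne_zero.mpr hd)

end exteriorPower

namespace groupCohomology

variable {k G : Type u} [CommRing k] [Group G] {A : Rep k G}

theorem cocycles₁_map_mul (f : cocycles₁ A) (g h : G) : f (g * h) = A.ρ g (f h) + f g :=
  (mem_cocycles₁_iff f).1 f.2 g h

theorem cocycles₁_map_mul_eq_zero (f : cocycles₁ A) {g h : G} (hg : f g = 0) (hh : f h = 0) :
    f (g * h) = 0 := by
  rw [cocycles₁_map_mul, hg, hh, map_zero, add_zero]

theorem rho_cocycles₁_eq_of_mul_eq_mul (f : cocycles₁ A) {t g g' : G} (ht : f t = 0)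
    (h : t * g = g' * t) : A.ρ t (f g) = f g' := by
  have := cocycles₁_map_mul f t g
  rwa [h, cocycles₁_map_mul, ht, map_zero, zero_add, add_zero, eq_comm] at this

theorem exists_cocycles₁_eq_d₀₁_on_subgroup (f : cocycles₁ A) (H : Subgroup G) [Finite H]
    (hH : IsUnit (Nat.card H : k)) : ∃ w : A, ∀ h ∈ H, f h = A.ρ h w - w := by
  have := Fintype.ofFinite H
  set S := ∑ h : H, f h
  refine ⟨-((hH.unit⁻¹ : kˣ) : k) • S, fun h hh => ?_⟩
  have key : S = A.ρ h S + (Nat.card H : k) • f h := calc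
    S = ∑ h' : H, f (h * h') :=
      (Fintype.sum_equiv (Equiv.mulLeft (⟨h, hh⟩ : H)) _ _ fun _ => rfl).symm
    _ = A.ρ h S + (Nat.card H : k) • f h := by
      simp only [cocycles₁_map_mul, sum_add_distrib, map_sum, sum_const, card_univ,
        Nat.card_eq_fintype_card, Nat.cast_smul_eq_nsmul, S]
  rw [map_smul, ← smul_sub, neg_smul, ← smul_neg, neg_sub, sub_eq_of_eq_add' key, smul_smul,
    IsUnit.val_inv_mul, one_smul]

theorem subsingleton_H1_of_isUnit_card_subgroup (H : Subgroup G) [Finite H]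
    (hH : IsUnit (Nat.card H : k))
    (h : ∀ f : cocycles₁ A, (∀ t ∈ H, f t = 0) → ∀ g, f g = 0) : Subsingleton (H1 A) := by
  suffices ∀ x : H1 A, x = 0 from ⟨fun x y => (this x).trans (this y).symm⟩
  intro x
  induction x using H1_induction_on with
  | h f =>
  obtain ⟨w, hw⟩ := exists_cocycles₁_eq_d₀₁_on_subgroup f H hH
  rw [H1π_eq_zero_iff]
  set c : cocycles₁ A := f - ⟨d₀₁ A w, d₀₁_apply_mem_cocycles₁ w⟩
  have hc_apply (g : G) : c g = f g - (A.ρ g w - w) := rfl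
  have hc := h c fun t ht => by rw [hc_apply, hw t ht, sub_self]
  exact ⟨w, funext fun g => by rw [d₀₁_hom_apply, eq_comm, ← sub_eq_zero, ← hc_apply, hc]⟩

end groupCohomology

namespace Matrix.SpecialLinearGroup

section

variable {ι R : Type*} [Fintype ι] [DecidableEq ι] [CommRing R]

variable (ι R) in
def diagonalSubgroup : Subgroup (SpecialLinearGroup ι R) where
  carrier := {g | ∃ d, (g : Matrix ι ι R) = diagonal d}
  mul_mem' := by
    rintro _ _ ⟨d, hd⟩ ⟨e, he⟩
    exact ⟨d * e, by rw [coe_mul, hd, he, diagonal_mul_diagonal]; rfl⟩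
  one_mem' := ⟨1, diagonal_one.symm⟩
  inv_mem' := by
    rintro _ ⟨d, hd⟩
    exact ⟨_, by rw [coe_inv, hd, adjugate_diagonal]⟩

theorem mem_diagonalSubgroup {g : SpecialLinearGroup ι R} :
    g ∈ diagonalSubgroup ι R ↔ ∃ d, (g : Matrix ι ι R) = diagonal d :=
  Iff.rfl

theorem mul_transvection_of_coe_eq_diagonal {g : SpecialLinearGroup ι R} {d : ι → R}
    (hg : (g : Matrix ι ι R) = diagonal d) {i j : ι} (hij : i ≠ j) {c c' : R}
    (h : d i * c = c' * d j) : g * transvection hij c = transvection hij c' * g := by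
  refine Subtype.ext ?_
  rw [coe_mul, coe_mul, hg, transvection_coe, transvection_coe, mul_add, add_mul,
    Matrix.mul_one, Matrix.one_mul]
  ext a b
  simp only [Matrix.add_apply, diagonal_mul, mul_diagonal, single_apply]
  split_ifs with hab
  · rw [← hab.1, ← hab.2, h]
  · rw [mul_zero, zero_mul]

end

section

variable {ι F : Type*} [Fintype ι] [DecidableEq ι] [Field F]

theorem pow_card_sub_one_eq_one_of_mem_diagonalSubgroup [Fintype F] {g : SpecialLinearGroup ι F}
    (hg : g ∈ diagonalSubgroup ι F) : g ^ (Fintype.card F - 1) = 1 := by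
  obtain ⟨d, hd⟩ := mem_diagonalSubgroup.mp hg
  have hdet : ∏ c, d c = 1 := by rw [← det_diagonal, ← hd]; exact g.2
  have hne (c : ι) : d c ≠ 0 := fun h => zero_ne_one (prod_eq_zero (mem_univ c) h ▸ hdet)
  ext1
  rw [coe_pow, hd, diagonal_pow, coe_one, ← diagonal_one]
  congr 1
  ext c
  exact FiniteField.pow_card_sub_one_eq_one _ (hne c)

theorem not_dvd_card_diagonalSubgroup [Finite F] (p : ℕ) [Fact p.Prime] [CharP F p] :
    ¬ p ∣ Nat.card (diagonalSubgroup ι F) := by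
  intro hp
  have := Fintype.ofFinite F
  have := Fintype.ofFinite (diagonalSubgroup ι F)
  rw [Nat.card_eq_fintype_card] at hp
  obtain ⟨g, hg⟩ := exists_prime_orderOf_dvd_card p hp
  have hdvd : p ∣ Fintype.card F - 1 := hg ▸ orderOf_dvd_of_pow_eq_one
    (Subtype.ext (pow_card_sub_one_eq_one_of_mem_diagonalSubgroup g.2))
  have := (CharP.cast_eq_zero_iff F p _).mpr hdvd
  rw [Nat.cast_sub Fintype.card_pos, FiniteField.cast_card_eq_zero, Nat.cast_one, zero_sub,
    neg_eq_zero] at this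
  exact one_ne_zero this

end

section

variable {k ι F : Type u} [CommRing k] [Fintype ι] [DecidableEq ι] [Field F]
  {A : Rep k (SpecialLinearGroup ι F)}

theorem cocycles₁_eq_zero_of_forall_transvection (f : cocycles₁ A)
    (hT : ∀ t ∈ diagonalSubgroup ι F, f t = 0)
    (htv : ∀ (i j : ι) (hij : i ≠ j) (c : F), f (transvection hij c) = 0)
    (g : SpecialLinearGroup ι F) : f g = 0 := by
  cases subsingleton_or_nontrivial ι
  · exact hT g ⟨_, (isDiag_of_subsingleton _).diagonal_diag.symm⟩
  · exact diagonal_transvection_induction' (fun g => f g = 0) g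
      (fun i j hij x hx => hT _ ⟨_, diag2n_coe hij x hx⟩) htv
      (fun _ _ => cocycles₁_map_mul_eq_zero f)

theorem rho_cocycles₁_transvection_eq_self (f : cocycles₁ A)
    (hT : ∀ t ∈ diagonalSubgroup ι F, f t = 0) {t : SpecialLinearGroup ι F} {d : ι → F}
    (ht : (t : Matrix ι ι F) = diagonal d) {i j : ι} (hij : i ≠ j) (hdij : d i = d j) (c : F) :
    A.ρ t (f (transvection hij c)) = f (transvection hij c) :=
  rho_cocycles₁_eq_of_mul_eq_mul f (hT t ⟨d, ht⟩)
    (mul_transvection_of_coe_eq_diagonal ht hij (by rw [hdij, mul_comm]))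

theorem cocycles₁_transvection_eq_zero_of_isTrivial [A.IsTrivial] (f : cocycles₁ A)
    (hT : ∀ t ∈ diagonalSubgroup ι F, f t = 0) {x : F} (hx0 : x ≠ 0) (hx : x ^ 2 ≠ 1)
    {i j : ι} (hij : i ≠ j) (c : F) : f (transvection hij c) = 0 := by
  have hscale (c : F) : f (transvection hij (x ^ 2 * c)) = f (transvection hij c) := by
    rw [← rho_cocycles₁_eq_of_mul_eq_mul f (hT _ ⟨_, diag2n_coe hij x hx0⟩)
      (mul_transvection_of_coe_eq_diagonal (diag2n_coe hij x hx0) hij ?_),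
      Representation.isTrivial_apply]
    simp only [if_pos, if_neg hij.symm]
    field_simp
  have := hscale (c / (x ^ 2 - 1))
  rwa [show x ^ 2 * (c / (x ^ 2 - 1)) = c + c / (x ^ 2 - 1) by
      field_simp [sub_ne_zero.mpr hx]; ring,
    transvection_add, cocycles₁_map_mul_of_isTrivial, add_eq_right] at this

end

end Matrix.SpecialLinearGroup

namespace Representation

variable {k G V : Type*} [CommRing k] [Group G] [AddCommGroup V] [Module k V]

theorem extPower_apply (ρ : Representation k G V) (i : ℕ) (g : G) :
    ρ.extPower i g = exteriorPower.map i (ρ g) := by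
  ext v
  rw [LinearMap.compAlternatingMap_apply, LinearMap.compAlternatingMap_apply,
    exteriorPower.map_apply_ιMulti, exteriorPower.ιMulti_apply_coe]
  exact ExteriorAlgebra.map_apply_ιMulti (ρ g) v

instance isTrivial_extPower_zero (ρ : Representation k G V) : (ρ.extPower 0).IsTrivial where
  out g := by
    rw [extPower_apply]
    ext v
    simp

end Representation

open Matrix.SpecialLinearGroup

section

variable {p r n : ℕ} [Fact p.Prime] {k : Type} [Field k] {φ : GaloisField p r →+* k}

theorem natRepSL_apply_of_coe_eq_diagonal {g : SpecialLinearGroup (Fin (n + 1)) (GaloisField p r)}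
    {d : Fin (n + 1) → GaloisField p r}
    (hg : (g : Matrix (Fin (n + 1)) (Fin (n + 1)) _) = diagonal d) :
    natRepSL p r n k φ g = (diagonal (φ ∘ d)).mulVecLin := by
  change ((g : Matrix (Fin (n + 1)) (Fin (n + 1)) _).map φ).mulVecLin = _
  rw [hg, diagonal_map (map_zero φ)]
  rfl

theorem natRepSL_extPower_cocycles₁_transvection_eq_zero {i : ℕ}
    (f : cocycles₁ (Rep.of ((natRepSL p r n k φ).extPower i)))
    (hT : ∀ t ∈ diagonalSubgroup (Fin (n + 1)) (GaloisField p r), f t = 0)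
    {x : GaloisField p r} (hx0 : x ≠ 0) (hx : x ^ 2 ≠ 1) (h2 : (-1 : GaloisField p r) ≠ 1)
    (hi0 : 0 < i) (hi : i ≤ n) {a b : Fin (n + 1)} (hab : a ≠ b) (c : GaloisField p r) :
    f (transvection hab c) = 0 := by
  refine exteriorPower.eq_zero_of_forall_exists_map_diagonal_eq_self _ fun s => ?_
  have hcard := Set.powersetCard.card_eq s
  have hs : s.val.Nonempty := card_pos.mp (by omega)
  have hsu : s.val ≠ univ := fun h => by
    rw [h, card_univ, Fintype.card_fin] at hcard
    omega
  obtain ⟨d, hd, hdab, hds⟩ :=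
    exists_prod_eq_one_and_apply_eq_and_prod_ne_one hx0 hx h2 hab hs hsu
  let t : SpecialLinearGroup (Fin (n + 1)) (GaloisField p r) :=
    ⟨diagonal d, by rwa [det_diagonal]⟩
  refine ⟨φ ∘ d, ?_, ?_⟩
  · rw [Function.comp_def, ← map_prod, ← φ.map_one]
    exact φ.injective.ne hds
  · rw [← natRepSL_apply_of_coe_eq_diagonal (g := t) rfl, ← Representation.extPower_apply]
    exact rho_cocycles₁_transvection_eq_self f hT rfl hab hdab c

end

theorem H1_SL_exteriorPower_natural_eq_zero_general (p r n i : ℕ) [Fact p.Prime]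
    (hp : 2 < p) (hq : 3 < p ^ r) (hi : i ≤ n)
    (k : Type) [Field k] [CharP k p] (φ : GaloisField p r →+* k) :
    Subsingleton (groupCohomology (Rep.of ((natRepSL p r n k φ).extPower i)) 1) := by
  obtain ⟨x, hx0, hx⟩ :=
    exists_ne_zero_sq_ne_one (GaloisField.card p r (by rintro rfl; simp at hq) ▸ hq)
  have h2 : (-1 : GaloisField p r) ≠ 1 :=
    Ring.neg_one_ne_one_of_char_ne_two (by rw [ringChar.eq (GaloisField p r) p]; omega)
  have hT : IsUnit (Nat.card (diagonalSubgroup (Fin (n + 1)) (GaloisField p r)) : k) :=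
    Ne.isUnit fun h => not_dvd_card_diagonalSubgroup p ((CharP.cast_eq_zero_iff k p _).mp h)
  refine subsingleton_H1_of_isUnit_card_subgroup _ hT fun f hf =>
    cocycles₁_eq_zero_of_forall_transvection f hf fun a b hab c => ?_
  rcases Nat.eq_zero_or_pos i with rfl | hi0
  · exact cocycles₁_transvection_eq_zero_of_isTrivial f hf hx0 hx hab c
  · exact natRepSL_extPower_cocycles₁_transvection_eq_zero f hf hx0 hx h2 hi0 hi hab c

/-- **Vanishing of `H¹` for `SL_{n+1}(𝔽_q)` with coefficients in exterior powers of the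
natural module (type `Aₙ`).**  Let `p > 2` be a prime, `q = p ^ r > 3` with `r ≥ 1`, let
`0 ≤ i ≤ n`, and let `k` be an algebraically closed field of characteristic `p`.  Then
`H¹(SL_{n+1}(𝔽_q), ⋀^i k^{n+1}) = 0`, where the action is induced by a ring homomorphism
`φ : 𝔽_q → k`. -/
theorem H1_SL_exteriorPower_natural_eq_zero (p r n i : ℕ) [Fact p.Prime]
    (hp : 2 < p) (hr : 1 ≤ r) (hq : 3 < p ^ r) (hi : i ≤ n)
    (k : Type) [Field k] [IsAlgClosed k] [CharP k p] (φ : GaloisField p r →+* k) :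
    Subsingleton (groupCohomology (Rep.of ((natRepSL p r n k φ).extPower i)) 1) :=
  H1_SL_exteriorPower_natural_eq_zero_general p r n i hp hq hi k φ
end

section
/- Let p be an odd prime and let n ≥ 1 and j be integers with 1 ≤ j ≤ n. Write n+1 = Σ_{i=0}^t b_i p^i in base p with 0 ≤ b_i < p and b_t ≠ 0, and write n+1−j = Σ_{i≥0} a_i p^i in base p with 0 ≤ a_i < p. Then the following are equivalent: (i) there exists i ≥ 0 with a_i > 0 and j = 2(p − a_i)p^i; (ii) there exists i with 0 ≤ i < t, b_i ≠ 0, and j = 2 b_i p^i. -/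
/-!
Both conditions force `j = 2 c p^i` with `0 < c < p`. Subtracting `2c` from a digit equal to `c`
needs one borrow from the next place and leaves the digit `p - c`; so the `i`-th digit of `n + 1 - j`
is `p - c` exactly when the `i`-th digit of `n + 1` is `c` and `n + 1` has a nonzero digit above
place `i`, i.e. `i < t`.
-/

theorem Nat.sub_two_mul_mod_eq_sub_iff {p c y : ℕ} (hc₀ : 0 < c) (hcp : c < p) :
    (y - 2 * c) % p = p - c ↔ y % p = c ∧ p ≤ y := by
  constructor
  · intro h
    have h2c : 2 * c ≤ y := by
      by_contra! hy
      rw [Nat.sub_eq_zero_of_le hy.le, Nat.zero_mod] at h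
      omega
    have hy : y = c + p * ((y - 2 * c) / p + 1) := by
      have := Nat.div_add_mod (y - 2 * c) p
      rw [mul_add]
      omega
    refine ⟨?_, ?_⟩
    · rw [hy, Nat.add_mul_mod_self_left, Nat.mod_eq_of_lt hcp]
    · have : p ≤ p * ((y - 2 * c) / p + 1) := Nat.le_mul_of_pos_right p (Nat.succ_pos _)
      omega
  · rintro ⟨hmod, hpy⟩
    have hdiv : 1 ≤ y / p := (Nat.one_le_div_iff (by omega)).2 hpy
    have hy : y - 2 * c = (p - c) + p * (y / p - 1) := by
      have := Nat.div_add_mod y p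
      rw [Nat.mul_sub, mul_one]
      have : p ≤ p * (y / p) := Nat.le_mul_of_pos_right p hdiv
      omega
    rw [hy, Nat.add_mul_mod_self_left, Nat.mod_eq_of_lt (by omega)]

theorem digit_sub_two_mul_iff {p q N j : ℕ} (hp : 0 < p) (hq : 0 < q) :
    (0 < (N - j) / q % p ∧ j = 2 * (p - (N - j) / q % p) * q) ↔
      (q * p ≤ N ∧ N / q % p ≠ 0 ∧ j = 2 * (N / q % p) * q) := by
  have hdiv (c : ℕ) (hjc : j = 2 * c * q) : (N - j) / q = N / q - 2 * c := by
    rw [hjc, mul_comm, Nat.sub_mul_div]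
  have hpN : q * p ≤ N ↔ p ≤ N / q := by rw [mul_comm, Nat.le_div_iff_mul_le hq]
  constructor
  · rintro ⟨ha, hjc⟩
    set a := (N - j) / q % p
    have hap : a < p := Nat.mod_lt _ hp
    have hc : (N / q - 2 * (p - a)) % p = p - (p - a) := by
      rw [Nat.sub_sub_self hap.le, ← hdiv _ hjc]
    obtain ⟨hmod, hle⟩ := (Nat.sub_two_mul_mod_eq_sub_iff (by omega) (by omega)).1 hc
    exact ⟨hpN.2 hle, by omega, by rw [hmod]; exact hjc⟩
  · rintro ⟨hle, hb, hjc⟩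
    have hbp : N / q % p < p := Nat.mod_lt _ hp
    have hdigit := (Nat.sub_two_mul_mod_eq_sub_iff (Nat.pos_of_ne_zero hb) hbp).2 ⟨rfl, hpN.1 hle⟩
    rw [hdiv _ hjc, hdigit]
    exact ⟨by omega, by rw [Nat.sub_sub_self hbp.le]; exact hjc⟩

theorem digit_criterion_equiv_general (p n j : ℕ) (hp : p.Prime) :
    (∃ i : ℕ, 0 < (Nat.digits p (n + 1 - j)).getD i 0 ∧
        j = 2 * (p - (Nat.digits p (n + 1 - j)).getD i 0) * p ^ i) ↔
    (∃ i : ℕ, i + 1 < (Nat.digits p (n + 1)).length ∧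
        (Nat.digits p (n + 1)).getD i 0 ≠ 0 ∧
        j = 2 * (Nat.digits p (n + 1)).getD i 0 * p ^ i) := by
  simp only [Nat.getD_digits _ _ hp.two_le, Nat.lt_digits_length_iff hp.one_lt, pow_succ]
  exact exists_congr fun i => digit_sub_two_mul_iff hp.pos (pow_pos hp.pos i)

/-- **Combinatorial equivalence underlying the reformulation of the Kleshchev–Sheth theorem
(type `Cₙ`).**  Let `p` be an odd prime and `1 ≤ j ≤ n`.  Writing `n + 1` in base `p` with
digits `b i` (top digit `b t ≠ 0`, so `t + 1` is the number of digits), and `n + 1 - j` in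
base `p` with digits `a i`, the following are equivalent:
(i)  there is `i` with `a i > 0` and `j = 2 * (p - a i) * p ^ i`;
(ii) there is `i < t` with `b i ≠ 0` and `j = 2 * (b i) * p ^ i`. -/
theorem digit_criterion_equiv (p n j : ℕ) (hp : p.Prime) (hodd : Odd p)
    (hj1 : 1 ≤ j) (hjn : j ≤ n) :
    (∃ i : ℕ, 0 < (Nat.digits p (n + 1 - j)).getD i 0 ∧
        j = 2 * (p - (Nat.digits p (n + 1 - j)).getD i 0) * p ^ i) ↔
    (∃ i : ℕ, i + 1 < (Nat.digits p (n + 1)).length ∧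
        (Nat.digits p (n + 1)).getD i 0 ≠ 0 ∧
        j = 2 * (Nat.digits p (n + 1)).getD i 0 * p ^ i) :=
  digit_criterion_equiv_general p n j hp
end

section
/- Let n ≥ 2. In ℚ^n with standard basis e_1, …, e_n, set α_i = e_i − e_{i+1} for 1 ≤ i ≤ n−1 and α_n = e_n; set ω_j = e_1 + ⋯ + e_j for 1 ≤ j ≤ n−1 and ω_n = (e_1 + ⋯ + e_n)/2. Call μ ∈ ℚ^n dominant integral if μ_1 ≥ μ_2 ≥ ⋯ ≥ μ_n ≥ 0 and either every μ_i ∈ ℤ or every μ_i ∈ ℤ + 1/2. Then: (i) for 1 ≤ j ≤ n−1 and μ dominant integral, ω_j − μ is a nonnegative integer combination of α_1, …, α_n if and only if μ = 0 or μ = ω_i for some 1 ≤ i ≤ j; (ii) for μ dominant integral, ω_n − μ is a nonnegative integer combination of α_1, …, α_n if and only if μ = ω_n. -/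
/-!
The partial sums `v ↦ v 0 + ⋯ + v k` are the basis dual to the simple roots, so `v` is a
nonnegative integral combination of the simple roots iff all its partial sums are natural numbers.
For `v = ω j - μ` the first partial sum `1 - μ 0` forces the coordinates of a dominant `μ` to be
integers in `[0, 1]`, so `μ = ω i` for some `i`, and the last partial sum `j - i` gives `i ≤ j`;
conversely `ω j - ω i` has coordinates in `{0, 1}`. For `v = ω n - μ` the first partial sum
`1/2 - μ 0` forces half-integral coordinates, whence `1/2 ≤ μ t ≤ μ 0 ≤ 1/2`.
-/

/-- The simple roots of type `Bₙ` in the standard realization in `ℚⁿ` (`0`-indexed):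
`α i = e i - e (i+1)` for `i < n - 1`, and `α (n-1) = e (n-1)` (the short simple root). -/
def simpleRootB (n : ℕ) (i : Fin n) : Fin n → ℚ := fun t =>
  if t = i then 1 else if (t : ℕ) = (i : ℕ) + 1 then -1 else 0

/-- The fundamental weights `ω j = e 0 + ⋯ + e (j-1)` of type `Bₙ` for `1 ≤ j ≤ n - 1`,
in the standard realization in `ℚⁿ` (`0`-indexed); `fundWeightB n 0 = 0`. -/
def fundWeightB (n : ℕ) (j : ℕ) : Fin n → ℚ := fun t => if (t : ℕ) < j then 1 else 0

/-- The last fundamental weight `ω n = (e 0 + ⋯ + e (n-1)) / 2` of type `Bₙ`. -/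
def lastFundWeightB (n : ℕ) : Fin n → ℚ := fun _ => 1 / 2

/-- `μ` is a dominant integral weight for type `Bₙ`:
`μ 0 ≥ μ 1 ≥ ⋯ ≥ μ (n-1) ≥ 0` and the coordinates are either all integers or all
half-integers. -/
def IsDominantB (n : ℕ) (μ : Fin n → ℚ) : Prop :=
  (∀ s t : Fin n, s ≤ t → μ t ≤ μ s) ∧ (∀ t, 0 ≤ μ t) ∧
    ((∀ t, ∃ m : ℤ, μ t = m) ∨ (∀ t, ∃ m : ℤ, μ t = m + 1 / 2))

open Finset

section PartialSum

variable {R : Type*} [Semiring R] {n : ℕ}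

def partialSum (k : Fin n) : (Fin n → R) →ₗ[R] R :=
  ∑ s ∈ Iic k, LinearMap.proj s

@[simp]
lemma partialSum_apply (k : Fin n) (v : Fin n → R) : partialSum k v = ∑ s ∈ Iic k, v s := by
  simp [partialSum]

lemma eq_zero_of_partialSum_eq_zero {w : Fin n → R} (h : ∀ k, partialSum k w = 0) :
    w = 0 := by
  funext t
  induction t using WellFoundedLT.induction with
  | _ t ih =>
    have hsum : ∑ s ∈ Iio t, w s = 0 := sum_eq_zero fun s hs => ih s (mem_Iio.mp hs)
    simpa [← Iio_insert, sum_insert, hsum] using h t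

lemma partialSum_bot [NeZero n] (v : Fin n → R) : partialSum ⊥ v = v ⊥ := by
  rw [partialSum_apply, show Iic (⊥ : Fin n) = {⊥} by ext; simp, sum_singleton]

lemma partialSum_top [NeZero n] (v : Fin n → R) : partialSum ⊤ v = ∑ t, v t := by
  simp [Iic_top]

end PartialSum

section RootsAndWeights

variable {n : ℕ}

lemma simpleRootB_apply (i t : Fin n) :
    simpleRootB n i t = (if t = i then 1 else 0) - (if (t : ℕ) = i + 1 then 1 else 0) := by
  unfold simpleRootB
  split_ifs <;> simp only [Fin.ext_iff] at * <;> first | omega | norm_num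

lemma partialSum_simpleRootB (i k : Fin n) :
    partialSum k (simpleRootB n i) = if i = k then 1 else 0 := by
  have hnext : ∑ s ∈ Iic k, (if (s : ℕ) = i + 1 then (1 : ℚ) else 0) =
      if (i : ℕ) + 1 ≤ k then 1 else 0 := by
    split_ifs with h
    · rw [sum_eq_single_of_mem ⟨i + 1, by omega⟩ (mem_Iic.mpr (Fin.le_def.mpr h))]
      · simp
      · intro s _ hs
        exact if_neg fun h' => hs (Fin.ext h')
    · refine sum_eq_zero fun s hs => if_neg fun h' => h ?_
      have hsk : s ≤ k := mem_Iic.mp hs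
      rw [Fin.le_def] at hsk
      omega
  simp only [partialSum_apply, simpleRootB_apply, sum_sub_distrib, sum_ite_eq', mem_Iic, hnext]
  split_ifs <;> simp only [Fin.ext_iff, Fin.le_def] at * <;> first | omega | norm_num

lemma partialSum_sum_smul_simpleRootB (c : Fin n → ℚ) (k : Fin n) :
    partialSum k (∑ i, c i • simpleRootB n i) = c k := by
  simp only [map_sum, map_smul, partialSum_simpleRootB, smul_eq_mul, mul_ite, mul_one, mul_zero,
    sum_ite_eq', mem_univ, if_true]

lemma exists_nat_comb_simpleRootB_iff (v : Fin n → ℚ) :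
    (∃ c : Fin n → ℕ, v = ∑ i, (c i : ℚ) • simpleRootB n i) ↔
      ∀ k, ∃ m : ℕ, partialSum k v = m := by
  constructor
  · rintro ⟨c, rfl⟩ k
    exact ⟨c k, partialSum_sum_smul_simpleRootB _ k⟩
  · intro h
    choose c hc using h
    refine ⟨c, sub_eq_zero.mp (eq_zero_of_partialSum_eq_zero fun k => ?_)⟩
    rw [map_sub, partialSum_sum_smul_simpleRootB, hc, sub_self]

lemma exists_nat_comb_simpleRootB_of_forall_nat {v : Fin n → ℚ} (h : ∀ t, ∃ m : ℕ, v t = m) :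
    ∃ c : Fin n → ℕ, v = ∑ i, (c i : ℚ) • simpleRootB n i := by
  choose m hm using h
  exact (exists_nat_comb_simpleRootB_iff v).2 fun k => ⟨∑ s ∈ Iic k, m s, by simp [hm]⟩

lemma fundWeightB_zero : fundWeightB n 0 = 0 := by
  funext t
  simp [fundWeightB]

lemma sum_fundWeightB {j : ℕ} (hj : j ≤ n) : ∑ t, fundWeightB n j t = j := by
  unfold fundWeightB
  have hfilter : (range n).filter (· < j) = range j := by
    ext t
    simp only [mem_filter, mem_range]
    omega
  rw [Fin.sum_univ_eq_sum_range (fun t => if t < j then (1 : ℚ) else 0), sum_boole, hfilter,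
    card_range]

lemma exists_nat_comb_fundWeightB_sub {i j : ℕ} (hij : i ≤ j) :
    ∃ c : Fin n → ℕ, fundWeightB n j - fundWeightB n i = ∑ k, (c k : ℚ) • simpleRootB n k := by
  refine exists_nat_comb_simpleRootB_of_forall_nat fun t => ?_
  simp only [Pi.sub_apply, fundWeightB]
  split_ifs
  exacts [⟨0, by norm_num⟩, ⟨1, by norm_num⟩, by omega, ⟨0, by norm_num⟩]

lemma exists_eq_fundWeightB_of_antitone {μ : Fin n → ℚ} (hμ : Antitone μ)
    (h01 : ∀ t, μ t = 0 ∨ μ t = 1) : ∃ i ≤ n, μ = fundWeightB n i := by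
  have hex : ∃ i, ∀ t : Fin n, i ≤ (t : ℕ) → μ t = 0 := ⟨n, fun t ht => absurd t.isLt (by omega)⟩
  refine ⟨Nat.find hex, Nat.find_min' hex fun t ht => absurd t.isLt (by omega), funext fun t => ?_⟩
  unfold fundWeightB
  split_ifs with ht
  · have hmin := Nat.find_min hex (by omega : Nat.find hex - 1 < Nat.find hex)
    push Not at hmin
    obtain ⟨u, hu, hu0⟩ := hmin
    have htu : μ u ≤ μ t := hμ (Fin.le_def.mpr (by omega))
    have hu1 : μ u = 1 := (h01 u).resolve_left hu0
    exact (h01 t).resolve_left fun ht0 => by linarith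
  · exact Nat.find_spec hex t (by omega)

end RootsAndWeights

lemma intCast_ne_half (z : ℤ) : (z : ℚ) ≠ 1 / 2 := by
  intro h
  have h2 : ((2 * z : ℤ) : ℚ) = (1 : ℤ) := by push_cast; linarith
  have : 2 * z = 1 := by exact_mod_cast h2
  omega

namespace IsDominantB

variable {n : ℕ} {μ : Fin n → ℚ}

lemma eq_zero_or_eq_one [NeZero n] (hμ : IsDominantB n μ) (h : ∃ m : ℕ, 1 - μ ⊥ = m) (t : Fin n) :
    μ t = 0 ∨ μ t = 1 := by
  obtain ⟨hanti, hnonneg, hint | hhalf⟩ := hμ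
  · obtain ⟨m, hm⟩ := h
    obtain ⟨p, hp⟩ := hint t
    have hle : μ t ≤ μ ⊥ := hanti _ _ bot_le
    have hbounds : (0 : ℚ) ≤ p ∧ (p : ℚ) ≤ 1 := by
      rw [← hp]
      exact ⟨hnonneg t, by linarith [m.cast_nonneg (α := ℚ)]⟩
    have : 0 ≤ p ∧ p ≤ 1 := by exact_mod_cast hbounds
    rcases (by omega : p = 0 ∨ p = 1) with rfl | rfl <;> simp [hp]
  · obtain ⟨m, hm⟩ := h
    obtain ⟨p, hp⟩ := hhalf ⊥
    exact absurd (by push_cast; linarith) (intCast_ne_half (1 - p - m))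

lemma eq_lastFundWeightB [NeZero n] (hμ : IsDominantB n μ) (h : ∃ m : ℕ, 1 / 2 - μ ⊥ = m) :
    μ = lastFundWeightB n := by
  obtain ⟨hanti, hnonneg, hint | hhalf⟩ := hμ
  · obtain ⟨m, hm⟩ := h
    obtain ⟨p, hp⟩ := hint ⊥
    exact absurd (by push_cast; linarith) (intCast_ne_half (p + m))
  · funext t
    obtain ⟨m, hm⟩ := h
    obtain ⟨p, hp⟩ := hhalf t
    have hp0 : (0 : ℚ) ≤ p := by
      have : (-1 : ℚ) < p := by linarith [hnonneg t]
      have : -1 < p := by exact_mod_cast this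
      exact_mod_cast (by omega : 0 ≤ p)
    have hle : μ t ≤ μ ⊥ := hanti _ _ bot_le
    have hm0 : (0 : ℚ) ≤ m := m.cast_nonneg
    simp only [lastFundWeightB]
    linarith

end IsDominantB

section Hasse

variable {n : ℕ} {μ : Fin n → ℚ}

lemma exists_nat_comb_fundWeightB_sub_iff {j : ℕ} (hj : 1 ≤ j) (hjn : j ≤ n)
    (hμ : IsDominantB n μ) :
    (∃ c : Fin n → ℕ, fundWeightB n j - μ = ∑ i, (c i : ℚ) • simpleRootB n i) ↔
      ∃ i ≤ j, μ = fundWeightB n i := by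
  constructor
  · intro hc
    have : NeZero n := ⟨by omega⟩
    have hsums := (exists_nat_comb_simpleRootB_iff _).1 hc
    have hbot : ∃ m : ℕ, 1 - μ ⊥ = m := by
      obtain ⟨m, hm⟩ := hsums ⊥
      rw [partialSum_bot, Pi.sub_apply, fundWeightB, bot_eq_zero, Fin.val_zero,
        if_pos (show 0 < j from hj)] at hm
      exact ⟨m, hm⟩
    obtain ⟨i, hin, rfl⟩ := exists_eq_fundWeightB_of_antitone hμ.1 (hμ.eq_zero_or_eq_one hbot)
    obtain ⟨m, hm⟩ := hsums ⊤
    rw [partialSum_top] at hm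
    simp only [Pi.sub_apply, sum_sub_distrib, sum_fundWeightB hjn, sum_fundWeightB hin] at hm
    have hij : (i : ℚ) ≤ j := by linarith [m.cast_nonneg (α := ℚ)]
    exact ⟨i, by exact_mod_cast hij, rfl⟩
  · rintro ⟨i, hij, rfl⟩
    exact exists_nat_comb_fundWeightB_sub hij

lemma exists_nat_comb_lastFundWeightB_sub_iff (hμ : IsDominantB n μ) :
    (∃ c : Fin n → ℕ, lastFundWeightB n - μ = ∑ i, (c i : ℚ) • simpleRootB n i) ↔
      μ = lastFundWeightB n := by
  rcases n.eq_zero_or_pos with rfl | hn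
  · exact iff_of_true ⟨0, Subsingleton.elim _ _⟩ (Subsingleton.elim _ _)
  have : NeZero n := .of_pos hn
  constructor
  · intro hc
    obtain ⟨m, hm⟩ := (exists_nat_comb_simpleRootB_iff _).1 hc ⊥
    exact hμ.eq_lastFundWeightB ⟨m, by rwa [partialSum_bot, Pi.sub_apply] at hm⟩
  · rintro rfl
    exact ⟨0, by simp⟩

end Hasse

theorem hasse_type_B_general (n : ℕ) :
    (∀ j : ℕ, 1 ≤ j → j ≤ n - 1 → ∀ μ : Fin n → ℚ, IsDominantB n μ →
      ((∃ c : Fin n → ℕ, fundWeightB n j - μ = ∑ i : Fin n, (c i : ℚ) • simpleRootB n i) ↔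
        (μ = 0 ∨ ∃ i : ℕ, 1 ≤ i ∧ i ≤ j ∧ μ = fundWeightB n i))) ∧
    (∀ μ : Fin n → ℚ, IsDominantB n μ →
      ((∃ c : Fin n → ℕ, lastFundWeightB n - μ = ∑ i : Fin n, (c i : ℚ) • simpleRootB n i) ↔
        μ = lastFundWeightB n)) := by
  refine ⟨fun j hj hjn μ hμ => ?_, fun μ hμ => exists_nat_comb_lastFundWeightB_sub_iff hμ⟩
  rw [exists_nat_comb_fundWeightB_sub_iff hj (by omega) hμ]
  constructor
  · rintro ⟨i, hij, rfl⟩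
    rcases i.eq_zero_or_pos with rfl | hi
    · exact .inl fundWeightB_zero
    · exact .inr ⟨i, hi, hij, rfl⟩
  · rintro (rfl | ⟨i, -, hij, rfl⟩)
    · exact ⟨0, j.zero_le, fundWeightB_zero.symm⟩
    · exact ⟨i, hij, rfl⟩

/-- **Hasse diagram of type `Bₙ`.**
(i) For `1 ≤ j ≤ n - 1` and `μ` dominant integral, `ω j - μ` is a nonnegative integral
combination of the simple roots iff `μ = 0` or `μ = ω i` for some `1 ≤ i ≤ j`.
(ii) For `μ` dominant integral, `ω n - μ` is such a combination iff `μ = ω n`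
(the minuscule weight `ω n` is minimal). -/
theorem hasse_type_B (n : ℕ) (hn : 2 ≤ n) :
    (∀ j : ℕ, 1 ≤ j → j ≤ n - 1 → ∀ μ : Fin n → ℚ, IsDominantB n μ →
      ((∃ c : Fin n → ℕ, fundWeightB n j - μ = ∑ i : Fin n, (c i : ℚ) • simpleRootB n i) ↔
        (μ = 0 ∨ ∃ i : ℕ, 1 ≤ i ∧ i ≤ j ∧ μ = fundWeightB n i))) ∧
    (∀ μ : Fin n → ℚ, IsDominantB n μ →
      ((∃ c : Fin n → ℕ, lastFundWeightB n - μ = ∑ i : Fin n, (c i : ℚ) • simpleRootB n i) ↔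
        μ = lastFundWeightB n)) :=
  hasse_type_B_general n
end

section
/- Let n ≥ 2. In ℤ^n with standard basis e_1, …, e_n, set α_i = e_i − e_{i+1} for 1 ≤ i ≤ n−1 and α_n = 2e_n; set ω_j = e_1 + ⋯ + e_j for 1 ≤ j ≤ n and ω_0 = 0. Call μ ∈ ℤ^n dominant integral if μ_1 ≥ μ_2 ≥ ⋯ ≥ μ_n ≥ 0. Then for 1 ≤ j ≤ n and μ dominant integral, ω_j − μ is a nonnegative integer combination of α_1, …, α_n if and only if μ = ω_{j−2k} for some integer k with 0 ≤ 2k ≤ j. -/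
/-! Summing coordinates kills every simple root except `α (n-1) = 2 • e (n-1)`, so
`ω j - μ = ∑ cᵢ • αᵢ` forces `∑ μ = j - 2 c_{n-1}`. The first coordinate of `∑ cᵢ • αᵢ` is a
positive multiple of `c₀ ≥ 0`, so `μ 0 ≤ 1`, and a dominant `μ` with entries in `{0, 1}` is the
fundamental weight `ω m` with `m = ∑ μ`. Conversely `ω j - ω (j - 2k)` is written out explicitly
in the simple roots. -/

/-- The simple roots of type `Cₙ` in the standard realization in `ℤⁿ` (`0`-indexed):
`α i = e i - e (i+1)` for `i < n - 1`, and `α (n-1) = 2 • e (n-1)`. -/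
def simpleRootC (n : ℕ) (i : Fin n) : Fin n → ℤ := fun t =>
  if t = i then (if (i : ℕ) = n - 1 then 2 else 1)
  else if (t : ℕ) = (i : ℕ) + 1 then -1 else 0

/-- The fundamental weights of type `Cₙ` in the standard realization in `ℤⁿ`
(`0`-indexed): `ω j = e 0 + ⋯ + e (j-1)` for `1 ≤ j ≤ n`, with the convention `ω 0 = 0`. -/
def fundWeightC (n : ℕ) (j : ℕ) : Fin n → ℤ := fun t => if (t : ℕ) < j then 1 else 0

section
variable {n : ℕ}

lemma sum_simpleRootC (i : Fin n) :
    ∑ t, simpleRootC n i t = if (i : ℕ) = n - 1 then 2 else 0 := by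
  by_cases hi : (i : ℕ) + 1 < n
  · rw [Fintype.sum_eq_add i ⟨i + 1, hi⟩ (by simp [Fin.ext_iff])]
    · grind [simpleRootC]
    · intro t _
      grind [simpleRootC]
  · rw [Fintype.sum_eq_single i]
    · grind [simpleRootC]
    · intro t _
      grind [simpleRootC]

lemma sum_smul_simpleRootC_apply_zero (c : Fin n → ℤ) (h : 0 < n) :
    (∑ i, c i • simpleRootC n i) ⟨0, h⟩ = (if n = 1 then 2 else 1) * c ⟨0, h⟩ := by
  simp only [Finset.sum_apply, Pi.smul_apply, smul_eq_mul]
  rw [Fintype.sum_eq_single ⟨0, h⟩]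
  · grind [simpleRootC]
  · intro i _
    grind [simpleRootC]

lemma sum_smul_simpleRootC_apply_succ (c : Fin n → ℤ) {s : ℕ} (h : s + 1 < n) :
    (∑ i, c i • simpleRootC n i) ⟨s + 1, h⟩ =
      (if s + 2 = n then 2 else 1) * c ⟨s + 1, h⟩ - c ⟨s, by omega⟩ := by
  simp only [Finset.sum_apply, Pi.smul_apply, smul_eq_mul]
  rw [Fintype.sum_eq_add ⟨s + 1, h⟩ ⟨s, by omega⟩ (by simp [Fin.ext_iff])]
  · grind [simpleRootC]
  · intro i _
    grind [simpleRootC]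

lemma sum_fundWeightC {j : ℕ} (hj : j ≤ n) : ∑ t, fundWeightC n j t = j := by
  simp [fundWeightC, Finset.sum_boole, Fin.card_filter_val_lt, hj]

lemma sum_apply_sum_smul_simpleRootC (c : Fin n → ℤ) (h : 0 < n) :
    ∑ t, (∑ i, c i • simpleRootC n i) t = 2 * c ⟨n - 1, by omega⟩ := by
  simp only [Finset.sum_apply, Pi.smul_apply, smul_eq_mul]
  rw [Finset.sum_comm]
  simp only [← Finset.mul_sum, sum_simpleRootC, mul_ite, mul_zero]
  rw [Fintype.sum_eq_single ⟨n - 1, by omega⟩ fun i hi =>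
    if_neg (by simpa [Fin.ext_iff] using hi)]
  grind

lemma eq_fundWeightC_of_le_one {μ : Fin n → ℤ} (hμ : Antitone μ) (h0 : ∀ t, 0 ≤ μ t)
    (h1 : ∀ t, μ t ≤ 1) {m : ℕ} (hm : ∑ t, μ t = m) : μ = fundWeightC n m := by
  funext t
  rcases (show μ t = 0 ∨ μ t = 1 by grind) with ht | ht
  · have hle : μ ≤ fundWeightC n t := fun s => by
      unfold fundWeightC
      split_ifs with hs
      · exact h1 s
      · exact ht ▸ hμ (not_lt.1 hs)
    have hm_le := Finset.sum_le_sum fun s (_ : s ∈ Finset.univ) => hle s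
    rw [hm, sum_fundWeightC t.isLt.le] at hm_le
    grind [fundWeightC]
  · have hle : fundWeightC n (t + 1) ≤ μ := fun s => by
      unfold fundWeightC
      split_ifs with hs
      · exact ht ▸ hμ (Nat.lt_succ_iff.1 hs)
      · exact h0 s
    have hm_ge := Finset.sum_le_sum fun s (_ : s ∈ Finset.univ) => hle s
    rw [hm, sum_fundWeightC t.isLt] at hm_ge
    grind [fundWeightC]

-- For `i < n - 1`, the coefficient of `α i` is the sum of the first `i + 1` coordinates of
-- `ω j - ω (j - 2k)`; the remaining `2k - (that sum)` is absorbed by `α (n-1) = 2 • e (n-1)`.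
def fundWeightCSubCoeff (n j k : ℕ) (i : Fin n) : ℕ :=
  if (i : ℕ) = n - 1 then k else min ((i : ℕ) + 1) j - min ((i : ℕ) + 1) (j - 2 * k)

lemma fundWeightC_sub_fundWeightC_eq_sum {j k : ℕ} (hk : 2 * k ≤ j) (hj : j ≤ n) :
    fundWeightC n j - fundWeightC n (j - 2 * k) =
      ∑ i, (fundWeightCSubCoeff n j k i : ℤ) • simpleRootC n i := by
  funext ⟨t, ht⟩
  cases t with
  | zero =>
    rw [sum_smul_simpleRootC_apply_zero _ ht]
    simp only [Pi.sub_apply, fundWeightC, fundWeightCSubCoeff]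
    split_ifs <;> omega
  | succ s =>
    rw [sum_smul_simpleRootC_apply_succ _ ht]
    simp only [Pi.sub_apply, fundWeightC, fundWeightCSubCoeff]
    split_ifs <;> omega

end

theorem hasse_type_C_general (n : ℕ) (j : ℕ) (hj1 : 1 ≤ j) (hjn : j ≤ n)
    (μ : Fin n → ℤ) (hmono : ∀ s t : Fin n, s ≤ t → μ t ≤ μ s) (hpos : ∀ t, 0 ≤ μ t) :
    (∃ c : Fin n → ℕ, fundWeightC n j - μ = ∑ i : Fin n, (c i : ℤ) • simpleRootC n i) ↔
      (∃ k : ℕ, 2 * k ≤ j ∧ μ = fundWeightC n (j - 2 * k)) := by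
  have hn : 0 < n := by omega
  constructor
  · rintro ⟨c, hc⟩
    set k := c ⟨n - 1, by omega⟩
    have hsum : ∑ t, μ t = j - 2 * k := by
      have hc_sum := congrArg (fun v => ∑ t, v t) hc
      simp only [Pi.sub_apply, Finset.sum_sub_distrib, sum_fundWeightC hjn,
        sum_apply_sum_smul_simpleRootC _ hn] at hc_sum
      linarith
    have hμ0 : μ ⟨0, hn⟩ ≤ 1 := by
      have hc0 := congrFun hc ⟨0, hn⟩
      rw [Pi.sub_apply, sum_smul_simpleRootC_apply_zero _ hn, fundWeightC,
        if_pos (show 0 < j from hj1)] at hc0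
      split_ifs at hc0 <;> omega
    have hle : ∀ t, μ t ≤ 1 := fun t => (hmono _ t (Nat.zero_le _)).trans hμ0
    have hk : 2 * k ≤ j := by
      have hsum_nonneg := Finset.sum_nonneg fun t (_ : t ∈ Finset.univ) => hpos t
      omega
    exact ⟨k, hk, eq_fundWeightC_of_le_one hmono hpos hle (by rw [hsum]; omega)⟩
  · rintro ⟨k, hk, rfl⟩
    exact ⟨_, fundWeightC_sub_fundWeightC_eq_sum hk hjn⟩

/-- **Hasse diagram of type `Cₙ`.** For `1 ≤ j ≤ n` and `μ` dominant integral
(i.e. `μ 0 ≥ μ 1 ≥ ⋯ ≥ μ (n-1) ≥ 0`), the difference `ω j - μ` is a nonnegative integral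
combination of the simple roots if and only if `μ = ω (j - 2k)` for some `0 ≤ 2k ≤ j`. -/
theorem hasse_type_C (n : ℕ) (hn : 2 ≤ n) (j : ℕ) (hj1 : 1 ≤ j) (hjn : j ≤ n)
    (μ : Fin n → ℤ) (hmono : ∀ s t : Fin n, s ≤ t → μ t ≤ μ s) (hpos : ∀ t, 0 ≤ μ t) :
    (∃ c : Fin n → ℕ, fundWeightC n j - μ = ∑ i : Fin n, (c i : ℤ) • simpleRootC n i) ↔
      (∃ k : ℕ, 2 * k ≤ j ∧ μ = fundWeightC n (j - 2 * k)) :=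
  hasse_type_C_general n j hj1 hjn μ hmono hpos
end
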